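/- Let R = GF(2)[c]/(c³) and S = R[[d]]. The element A = (1 + c)·(1 + c + d)·(1 + d + c²d)·(1 + d)^{-1} is a unit in S, and for every natural number i the coefficient of c² in the d^i coefficient of A^{-1} equals 1 if i ≡ 0 or 1 (mod 4), and 0 if i ≡ 2 or 3 (mod 4). In particular, for i = 2^u(2v+1) with u ≥ 2 this coefficient equals 1. -/

import Mathlib

open Polynomial PowerSeries

noncomputable section

/-- The ring `R = GF(2)[c] / (c³)`. -/
abbrev R2 : Type := AdjoinRoot (Polynomial.X ^ 3 : Polynomial (ZMod 2))

/-- The class of the variable `c` in `R = GF(2)[c] / (c³)`. -/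
def cR : R2 := AdjoinRoot.root _

/-- The power series ring `S = R[[d]]`. -/
abbrev S2 : Type := PowerSeries R2

/-- The image of `c` in `S = R[[d]]`. -/
def cS : S2 := PowerSeries.C cR

/-- The variable `d` of `S = R[[d]]`. -/
def dS : S2 := PowerSeries.X

/-- The coefficient of `c²` of an element of `R = GF(2)[c] / (c³)`,
computed via the unique representative polynomial of degree `< 3`. -/
def coefc2 (x : R2) : ZMod 2 :=
  (AdjoinRoot.modByMonicHom (Polynomial.monic_X_pow 3) x).coeff 2

/-!
Modulo `2` and `c³` one has `(1 + c)(1 + c + d)(1 + d + c²d) = (1 + c²)(1 + (1 + c)d)(1 + d)`,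
so `A = (1 + c²)(1 + (1 + c)d)`. Since `(1 + c²)² = 1` and `-1 = 1`, the inverse of `A` is
`(1 + c²) ∑ (1 + c)ⁱ dⁱ`. Its `dⁱ` coefficient `(1 + c²)(1 + c)ⁱ` depends only on `i mod 4`, because
`(1 + c)⁴ = 1 + c⁴ = 1`, and for `i = 0, 1, 2, 3` it is `1 + c²`, `1 + c + c²`, `1`, `1 + c`.
-/

theorem Ring.inverse_eq_of_mul_eq_one {M : Type*} [CommMonoidWithZero M] {x y : M}
    (h : x * y = 1) : Ring.inverse x = y := by
  simpa [h] using Ring.inverse_mul_cancel_left x y (.of_mul_eq_one y h)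

namespace PowerSeries

variable {R : Type*} [CommRing R] {c : R}

theorem mk_pow_mul_one_sub_C_mul_X (a : R) : mk (a ^ ·) * (1 - C a * X) = 1 := by
  simpa [rescale_mk, rescale_X] using congrArg (rescale a) (mk_one_mul_one_sub_eq_one R)

/-- The element `A` (the total Stiefel–Whitney class of the nonstandard normal bundle), with
`d = X`. -/
def swClass (c : R) : R⟦X⟧ :=
  (1 + C c) * (1 + C c + X) * (1 + X + C c ^ 2 * X) * Ring.inverse (1 + X)

section CharTwo

variable (h2 : (2 : R) = 0) (hc : c ^ 3 = 0)
include h2 hc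

theorem swClass_eq : swClass c = C (1 + c ^ 2) * (1 - C (1 + c) * X) := by
  have h2' : (2 : R⟦X⟧) = 0 := by rw [← map_ofNat C 2, h2, map_zero]
  have hc' : C c ^ 3 = 0 := by rw [← map_pow, hc, map_zero]
  have hunit : IsUnit (1 + X : R⟦X⟧) := by simp [isUnit_iff_constantCoeff]
  rw [swClass, eq_comm, Ring.eq_mul_inverse_iff_mul_eq _ _ _ hunit]
  simp only [map_add, map_one, map_pow]
  linear_combination
    -(C c + X + 2 * C c * X + C c ^ 2 * X + C c ^ 3 * X + X ^ 2 + C c * X ^ 2 + C c ^ 2 * X ^ 2 +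
      C c ^ 3 * X ^ 2) * h2' - (X + C c * X) * hc'

theorem swClass_mul_inverse_eq_one :
    swClass c * (C (1 + c ^ 2) * mk ((1 + c) ^ ·)) = 1 := by
  have hsq : (1 + c ^ 2) * (1 + c ^ 2) = 1 := by linear_combination c ^ 2 * h2 + c * hc
  rw [swClass_eq h2 hc, mul_mul_mul_comm, ← map_mul, hsq, map_one, one_mul, mul_comm,
    mk_pow_mul_one_sub_C_mul_X]

theorem coeff_inverse_swClass (n : ℕ) :
    coeff n (Ring.inverse (swClass c)) = (1 + c ^ 2) * (1 + c) ^ n := by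
  rw [Ring.inverse_eq_of_mul_eq_one (swClass_mul_inverse_eq_one h2 hc), coeff_C_mul, coeff_mk]

end CharTwo

end PowerSeries

theorem two_eq_zero_R2 : (2 : R2) = 0 := by
  rw [← map_ofNat (algebraMap (ZMod 2) R2) 2]
  exact map_zero _

theorem cR_pow_three : cR ^ 3 = 0 := by
  rw [cR, ← AdjoinRoot.mk_X, ← map_pow, AdjoinRoot.mk_self]

theorem coefc2_add (x y : R2) : coefc2 (x + y) = coefc2 x + coefc2 y := by
  simp [coefc2]

theorem coefc2_mk_of_natDegree_lt {f : Polynomial (ZMod 2)} (hf : f.natDegree < 3) :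
    coefc2 (AdjoinRoot.mk _ f) = f.coeff 2 := by
  rw [coefc2, AdjoinRoot.modByMonicHom_mk, (modByMonic_eq_self_iff (monic_X_pow 3)).2]
  rw [degree_X_pow]
  exact degree_le_natDegree.trans_lt (by exact_mod_cast hf)

theorem coefc2_one : coefc2 1 = 0 := by
  rw [← map_one (AdjoinRoot.mk _), coefc2_mk_of_natDegree_lt (by simp), Polynomial.coeff_one]
  rfl

theorem coefc2_cR : coefc2 cR = 0 := by
  rw [cR, ← AdjoinRoot.mk_X, coefc2_mk_of_natDegree_lt (by simp), Polynomial.coeff_X]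
  rfl

theorem coefc2_cR_sq : coefc2 (cR ^ 2) = 1 := by
  rw [cR, ← AdjoinRoot.mk_X, ← map_pow, coefc2_mk_of_natDegree_lt (by simp)]
  simp

theorem one_add_cR_pow_four : (1 + cR) ^ 4 = 1 := by
  linear_combination (2 * cR + 3 * cR ^ 2) * two_eq_zero_R2 + (4 + cR) * cR_pow_three

theorem coefc2_one_add_sq_mul_one_add_pow (n : ℕ) :
    coefc2 ((1 + cR ^ 2) * (1 + cR) ^ n) = if n % 4 = 0 ∨ n % 4 = 1 then 1 else 0 := by
  have hn : (1 + cR) ^ n = (1 + cR) ^ (n % 4) := by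
    conv_lhs => rw [← Nat.div_add_mod n 4, pow_add, pow_mul, one_add_cR_pow_four, one_pow, one_mul]
  have h2 := two_eq_zero_R2
  have hc := cR_pow_three
  rw [hn]
  obtain h | h | h | h : n % 4 = 0 ∨ n % 4 = 1 ∨ n % 4 = 2 ∨ n % 4 = 3 := by omega
  all_goals simp only [h]
  · rw [show (1 + cR ^ 2) * (1 + cR) ^ 0 = 1 + cR ^ 2 by ring]
    simp [coefc2_add, coefc2_one, coefc2_cR_sq]
  · rw [show (1 + cR ^ 2) * (1 + cR) ^ 1 = 1 + cR + cR ^ 2 by linear_combination hc]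
    simp [coefc2_add, coefc2_one, coefc2_cR, coefc2_cR_sq]
  · rw [show (1 + cR ^ 2) * (1 + cR) ^ 2 = 1 by
      linear_combination (cR + cR ^ 2 + cR ^ 3) * h2 + cR * hc]
    simp [coefc2_one]
  · rw [show (1 + cR ^ 2) * (1 + cR) ^ 3 = 1 + cR by
      linear_combination (cR + 2 * cR ^ 2) * h2 + (4 + 3 * cR + cR ^ 2) * hc]
    simp [coefc2_add, coefc2_one, coefc2_cR]

theorem unit_and_coefc2_a_one :
    IsUnit ((1 + cS) * (1 + cS + dS) * (1 + dS + cS ^ 2 * dS) * Ring.inverse (1 + dS)) ∧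
      (∀ i : ℕ,
        coefc2 (PowerSeries.coeff i
            (Ring.inverse
              ((1 + cS) * (1 + cS + dS) * (1 + dS + cS ^ 2 * dS) * Ring.inverse (1 + dS)))) =
          if i % 4 = 0 ∨ i % 4 = 1 then 1 else 0) ∧
      ∀ u v : ℕ, 2 ≤ u →
        coefc2 (PowerSeries.coeff (2 ^ u * (2 * v + 1))
            (Ring.inverse
              ((1 + cS) * (1 + cS + dS) * (1 + dS + cS ^ 2 * dS) * Ring.inverse (1 + dS)))) = 1 := by
  have hA : (1 + cS) * (1 + cS + dS) * (1 + dS + cS ^ 2 * dS) * Ring.inverse (1 + dS) =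
      swClass cR := rfl
  have hcoeff (i : ℕ) : coefc2 (coeff i (Ring.inverse (swClass cR))) =
      if i % 4 = 0 ∨ i % 4 = 1 then 1 else 0 := by
    rw [coeff_inverse_swClass two_eq_zero_R2 cR_pow_three, coefc2_one_add_sq_mul_one_add_pow]
  rw [hA]
  refine ⟨.of_mul_eq_one _ (swClass_mul_inverse_eq_one two_eq_zero_R2 cR_pow_three), hcoeff,
    fun u v hu => ?_⟩
  have h4 : 4 ∣ 2 ^ u * (2 * v + 1) := (pow_dvd_pow 2 hu).mul_right _
  rw [hcoeff, if_pos (Or.inl (Nat.mod_eq_zero_of_dvd h4))]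

end
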